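/- Let n ≥ 3 and consider any coloring model on n vertices with at most 2 colors per vertex whose induced random graph distribution satisfies Pr[X_e] > 1/4 for every unordered pair e of distinct vertices. Then the sampled graph is connected with positive probability. -/

import Mathlib

/-
Every vertex `v` gets a colour `maj v` of probability `A v ≥ 1/2` and a colour `alt v` of
positive probability carrying the remaining mass `1 - A v`; every colouring by these has
positive probability, so suppose all of them give disconnected graphs. For a vertex `v`, colour
the component of `v` in the all-`maj` graph by `maj` and every other vertex by `alt`; some `z` is
then unreachable from `v`, write `v → z`. As `Pr[X_e] > 1/4 ≥ (1 - A u)(1 - A w)`, every pair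
needs an edge that uses a `maj` colour. Hence if `v → z → w`, then either the `alt` colours of
`z` and `w` are adjacent and `v → w`, or `(1 - A z) A w > 1/4 ≥ (1 - A w) A w`, that is
`A z < A w`. Every vertex has a `→`-successor, so there is a `→`-cycle; a shortest one has no
step of the first kind, so `A` increases strictly all the way round it, which is absurd.
-/

open scoped Classical

structure ColoringModel (n : ℕ) where
  Ω : Fin n → Type
  fin : ∀ v, Fintype (Ω v)
  p : ∀ v, Ω v → ℝ
  nonneg : ∀ v ω, 0 ≤ p v ω
  sum_one : ∀ v, ∑ ω ∈ @Finset.univ (Ω v) (fin v), p v ω = 1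
  f : ∀ u v : Fin n, Ω u → Ω v → Bool
  symm : ∀ u v x y, f u v x y = f v u y x

def ColoringModel.graph {n : ℕ} (M : ColoringModel n) (ω : ∀ v, M.Ω v) :
    SimpleGraph (Fin n) where
  Adj u v := u ≠ v ∧ M.f u v (ω u) (ω v) = true
  symm := ⟨by
    rintro u v ⟨h1, h2⟩
    refine ⟨h1.symm, ?_⟩
    rw [M.symm]
    exact h2⟩
  loopless := ⟨fun u h => h.1 rfl⟩

noncomputable def ColoringModel.pr {n : ℕ} (M : ColoringModel n)
    (P : SimpleGraph (Fin n) → Prop) : ℝ :=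
  letI := M.fin
  ∑ ω : (∀ v, M.Ω v), if P (M.graph ω) then ∏ v, M.p v (ω v) else 0

noncomputable def ColoringModel.dist {n : ℕ} (M : ColoringModel n)
    (G : SimpleGraph (Fin n)) : ℝ :=
  M.pr (fun H => H = G)

section Cycles

variable {α β : Type*} {R : α → α → Prop}

theorem rel_mod_of_rel_wrap {u : ℕ → α} {m : ℕ} (hm : 2 ≤ m)
    (hchain : ∀ t, R (u t) (u (t + 1))) (hwrap : R (u (m - 2)) (u 0)) (s : ℕ) :
    R (u (s % (m - 1))) (u ((s + 1) % (m - 1))) := by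
  have hlt : s % (m - 1) < m - 1 := Nat.mod_lt _ (by omega)
  rw [← Nat.mod_add_mod]
  rcases (show s % (m - 1) + 1 < m - 1 ∨ s % (m - 1) = m - 2 by omega) with hsucc | hlast
  · rw [Nat.mod_eq_of_lt hsucc]
    exact hchain _
  · rwa [hlast, show m - 2 + 1 = m - 1 by omega, Nat.mod_self]

theorem exists_periodic_chain [Finite α] [Nonempty α] (serial : ∀ v, ∃ z, R v z) :
    ∃ m, 0 < m ∧ ∃ u : ℕ → α, Function.Periodic u m ∧ ∀ t, R (u t) (u (t + 1)) := by
  choose N hN using serial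
  obtain ⟨i, j, hij, heq⟩ :=
    Finite.exists_ne_map_eq_of_infinite fun k : ℕ => N^[k] (Classical.arbitrary α)
  wlog hlt : i < j generalizing i j
  · exact this j i hij.symm heq.symm (by omega)
  refine ⟨j - i, by omega, fun t => N^[t + i] (Classical.arbitrary α), fun t => ?_,
    fun t => ?_⟩
  · dsimp only
    rw [show t + (j - i) + i = t + j by omega, Function.iterate_add_apply, ← heq,
      ← Function.iterate_add_apply]
  · dsimp only
    rw [show t + 1 + i = (t + i) + 1 by omega, Function.iterate_succ_apply']
    exact hN _

variable [Preorder β] {P : α → α → Prop} {B : α → β}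

theorem not_periodic_chain_of_shortcut_of_ascent (irrefl : ∀ v, ¬R v v)
    (shortcut : ∀ v z w, R v z → R z w → P z w → R v w)
    (ascent : ∀ z w, R z w → ¬P z w → B z < B w)
    {m : ℕ} (hm : 0 < m) {u : ℕ → α} (hu : Function.Periodic u m)
    (hchain : ∀ t, R (u t) (u (t + 1))) : False := by
  induction m using Nat.strong_induction_on generalizing u with
  | _ m ih =>
  by_cases hpure : ∀ t, ¬P (u t) (u (t + 1))
  · have hmono : StrictMono (B ∘ u) :=
      strictMono_nat_of_lt_succ fun t => ascent _ _ (hchain t) (hpure t)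
    exact (hmono hm).ne (congrArg B hu.eq).symm
  obtain ⟨t, hP⟩ := not_forall_not.mp hpure
  rcases (show m = 1 ∨ 2 ≤ m by omega) with rfl | hm2
  · exact irrefl _ (hu t ▸ hchain t)
  -- rotate so that the shortcut step ends at index `m`, then drop index `m - 1`
  set w : ℕ → α := fun s => u (s + (t + 1)) with hw
  have hwu : Function.Periodic w m := hu.add_const _
  have hwchain : ∀ s, R (w s) (w (s + 1)) := fun s => by
    simp only [hw, show s + 1 + (t + 1) = s + (t + 1) + 1 by omega]
    exact hchain _
  have hwrap : R (w (m - 2)) (w 0) := by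
    rw [← hwu.eq]
    refine shortcut _ _ _ (hwchain (m - 2)) ?_ ?_ <;>
      simp only [hw, show m - 2 + 1 + (t + 1) = t + m by omega, hu t,
        show m + (t + 1) = t + 1 + m by omega, hu (t + 1)]
    · exact hchain t
    · exact hP
  exact ih (m - 1) (by omega) (by omega) (fun s => by simp [Nat.add_mod_right])
    (rel_mod_of_rel_wrap hm2 hwchain hwrap)

theorem exists_forall_not_rel_of_shortcut_of_ascent [Finite α] [Nonempty α]
    (irrefl : ∀ v, ¬R v v) (shortcut : ∀ v z w, R v z → R z w → P z w → R v w)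
    (ascent : ∀ z w, R z w → ¬P z w → B z < B w) : ∃ v, ∀ z, ¬R v z := by
  by_contra! serial
  obtain ⟨m, hm, u, hu, hchain⟩ := exists_periodic_chain serial
  exact not_periodic_chain_of_shortcut_of_ascent irrefl shortcut ascent hm hu hchain

end Cycles

section Marginals

variable {ι : Type*} [Fintype ι] [DecidableEq ι] {Ω : ι → Type*} [∀ i, Fintype (Ω i)]
  (p : ∀ i, Ω i → ℝ)

theorem sum_prod_mul_eq_sum_mul_sum_piSplitAt (i : ι) (F : (∀ j, Ω j) → ℝ) :
    ∑ ω : ∀ j, Ω j, (∏ j, p j (ω j)) * F ω =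
      ∑ x, p i x * ∑ ω : ∀ j : {j // j ≠ i}, Ω j,
        (∏ j : {j // j ≠ i}, p j (ω j)) * F ((Equiv.piSplitAt i Ω).symm (x, ω)) := by
  rw [← (Equiv.piSplitAt i Ω).symm.sum_comp, Fintype.sum_prod_type]
  refine Finset.sum_congr rfl fun x _ => ?_
  rw [Finset.mul_sum]
  refine Finset.sum_congr rfl fun ω _ => ?_
  rw [Fintype.prod_eq_mul_prod_subtype_ne _ i, mul_assoc]
  congr 2
  · simp [Equiv.piSplitAt]
  · exact Finset.prod_congr rfl fun j _ => by simp [Equiv.piSplitAt, j.2]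

variable (hp : ∀ i, ∑ x, p i x = 1)
include hp

theorem sum_prod_mul_apply (i : ι) (φ : Ω i → ℝ) :
    ∑ ω : ∀ j, Ω j, (∏ j, p j (ω j)) * φ (ω i) = ∑ x, p i x * φ x := by
  rw [sum_prod_mul_eq_sum_mul_sum_piSplitAt p i]
  refine Finset.sum_congr rfl fun x _ => ?_
  simp [Equiv.piSplitAt, ← Finset.sum_mul, ← Fintype.prod_sum, hp]

theorem sum_prod_mul_apply₂ {i j : ι} (hij : i ≠ j) (φ : Ω i → Ω j → ℝ) :
    ∑ ω : ∀ k, Ω k, (∏ k, p k (ω k)) * φ (ω i) (ω j) =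
      ∑ x, ∑ y, p i x * p j y * φ x y := by
  rw [sum_prod_mul_eq_sum_mul_sum_piSplitAt p i]
  refine Finset.sum_congr rfl fun x _ => ?_
  have := sum_prod_mul_apply (fun k : {k // k ≠ i} => p k) (fun k => hp k) ⟨j, hij.symm⟩
    (φ x)
  simp [Equiv.piSplitAt, hij.symm, this, Finset.mul_sum, mul_assoc]

end Marginals

theorem exists_majority_split {α : Type*} [Fintype α] (p : α → ℝ) (h0 : ∀ x, 0 ≤ p x)
    (h1 : ∑ x, p x = 1) (h2 : Fintype.card α ≤ 2) :
    ∃ a b, 1 / 2 ≤ p a ∧ 0 < p b ∧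
      ∀ g : α → ℝ, ∑ x, p x * g x = p a * g a + (1 - p a) * g b := by
  have : Nonempty α := by
    by_contra h
    simp [not_nonempty_iff.mp h] at h1
  obtain ⟨a, -, ha⟩ := Finset.exists_max_image Finset.univ p Finset.univ_nonempty
  have hpair : ∀ b ≠ a, ∀ g : α → ℝ, ∑ x, p x * g x = p a * g a + p b * g b := by
    intro b hba g
    have huniv : ({a, b} : Finset α) = Finset.univ :=
      Finset.eq_univ_of_card _
        (le_antisymm (Finset.card_le_univ _) (by rwa [Finset.card_pair hba.symm]))
    rw [← huniv, Finset.sum_pair hba.symm]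
  by_cases hb : ∃ b ≠ a, 0 < p b
  · obtain ⟨b, hba, hpb⟩ := hb
    have hsum := hpair b hba 1
    simp only [Pi.one_apply, mul_one, h1] at hsum
    refine ⟨a, b, by linarith [ha b (Finset.mem_univ b)], hpb, fun g => ?_⟩
    rw [hpair b hba g, show p b = 1 - p a by linarith]
  · push Not at hb
    have hzero : ∀ b ≠ a, p b = 0 := fun b hba => le_antisymm (hb b hba) (h0 b)
    have hsingle : ∀ g : α → ℝ, ∑ x, p x * g x = p a * g a := fun g =>
      Finset.sum_eq_single a (fun b _ hba => by rw [hzero b hba, zero_mul]) (by simp)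
    have hpa : p a = 1 := by simpa [h1] using (hsingle 1).symm
    exact ⟨a, a, by rw [hpa]; norm_num, by rw [hpa]; norm_num, fun g => by simp [hsingle, hpa]⟩

theorem SimpleGraph.Reachable.mono_of_reachable {V : Type*} {G H : SimpleGraph V} {v w : V}
    (hGH : ∀ x y, G.Reachable v x → G.Adj x y → H.Adj x y) (h : G.Reachable v w) :
    H.Reachable v w := by
  rw [SimpleGraph.reachable_iff_reflTransGen] at h
  induction h with
  | refl => rfl
  | tail hx hxy ih =>
    exact ih.trans (hGH _ _ ((SimpleGraph.reachable_iff_reflTransGen _ _).mpr hx) hxy).reachable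

attribute [local instance] ColoringModel.fin

namespace ColoringModel

variable {n : ℕ} (M : ColoringModel n)

theorem p_le_one (v : Fin n) (x : M.Ω v) : M.p v x ≤ 1 :=
  M.sum_one v ▸ Finset.single_le_sum (fun y _ => M.nonneg v y) (Finset.mem_univ x)

theorem pr_pos_of_graph {P : SimpleGraph (Fin n) → Prop} {ω : ∀ v, M.Ω v}
    (hP : P (M.graph ω)) (hω : ∀ v, 0 < M.p v (ω v)) : 0 < M.pr P := by
  refine Finset.sum_pos' (fun ω' _ => ?_) ⟨ω, Finset.mem_univ _, ?_⟩
  · split_ifs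
    exacts [Finset.prod_nonneg fun v _ => M.nonneg v _, le_rfl]
  · rw [if_pos hP]
    exact Finset.prod_pos fun v _ => hω v

theorem pr_adj_eq {u v : Fin n} (huv : u ≠ v) :
    M.pr (fun G => G.Adj u v) =
      ∑ x, ∑ y, M.p u x * M.p v y * (if M.f u v x y then 1 else 0) := by
  rw [← sum_prod_mul_apply₂ M.p M.sum_one huv]
  refine Finset.sum_congr rfl fun ω _ => ?_
  by_cases h : M.f u v (ω u) (ω v) <;> simp [ColoringModel.graph, h, huv]

structure MajoritySplit where
  maj : ∀ v, M.Ω v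
  alt : ∀ v, M.Ω v
  half_le : ∀ v, 1 / 2 ≤ M.p v (maj v)
  alt_pos : ∀ v, 0 < M.p v (alt v)
  sum_eq : ∀ v (g : M.Ω v → ℝ),
    ∑ x, M.p v x * g x = M.p v (maj v) * g (maj v) + (1 - M.p v (maj v)) * g (alt v)

theorem nonempty_majoritySplit (h : ∀ v, Nat.card (M.Ω v) ≤ 2) : Nonempty M.MajoritySplit := by
  choose maj alt half_le alt_pos sum_eq using fun v => exists_majority_split (M.p v)
    (M.nonneg v) (M.sum_one v) (by rw [← Nat.card_eq_fintype_card]; exact h v)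
  exact ⟨⟨maj, alt, half_le, alt_pos, sum_eq⟩⟩

namespace MajoritySplit

variable {M} (S : M.MajoritySplit)

noncomputable def majProb (v : Fin n) : ℝ := M.p v (S.maj v)

theorem pr_adj_eq {u v : Fin n} (huv : u ≠ v) :
    M.pr (fun G => G.Adj u v) =
      S.majProb u * (S.majProb v * (if M.f u v (S.maj u) (S.maj v) then 1 else 0) +
          (1 - S.majProb v) * (if M.f u v (S.maj u) (S.alt v) then 1 else 0)) +
        (1 - S.majProb u) * (S.majProb v * (if M.f u v (S.alt u) (S.maj v) then 1 else 0) +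
          (1 - S.majProb v) * (if M.f u v (S.alt u) (S.alt v) then 1 else 0)) := by
  simp only [M.pr_adj_eq huv, mul_assoc, ← Finset.mul_sum, S.sum_eq, majProb]

theorem pr_adj_le_quarter {u v : Fin n} (huv : u ≠ v)
    (haa : M.f u v (S.maj u) (S.maj v) = false) (hab : M.f u v (S.maj u) (S.alt v) = false)
    (hba : M.f u v (S.alt u) (S.maj v) = false) : M.pr (fun G => G.Adj u v) ≤ 1 / 4 := by
  have hu := S.half_le u
  have hv := S.half_le v
  have hu' := M.p_le_one u (S.maj u)
  rw [S.pr_adj_eq huv, haa, hab, hba]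
  simp only [majProb, Bool.false_eq_true, ↓reduceIte]
  split_ifs <;> nlinarith

theorem pr_adj_le {u v : Fin n} (huv : u ≠ v)
    (haa : M.f u v (S.maj u) (S.maj v) = false) (hab : M.f u v (S.maj u) (S.alt v) = false)
    (hbb : M.f u v (S.alt u) (S.alt v) = false) :
    M.pr (fun G => G.Adj u v) ≤ (1 - S.majProb u) * S.majProb v := by
  have hu' := M.p_le_one u (S.maj u)
  have hv := S.half_le v
  rw [S.pr_adj_eq huv, haa, hab, hbb]
  simp only [majProb, Bool.false_eq_true, ↓reduceIte]
  split_ifs <;> nlinarith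

noncomputable def coloring (T : Set (Fin n)) : ∀ v, M.Ω v :=
  fun v => if v ∈ T then S.maj v else S.alt v

theorem pr_pos_of_coloring {P : SimpleGraph (Fin n) → Prop} (T : Set (Fin n))
    (hP : P (M.graph (S.coloring T))) : 0 < M.pr P := by
  refine M.pr_pos_of_graph hP fun v => ?_
  by_cases hv : v ∈ T <;> simp only [coloring, hv, ↓reduceIte]
  exacts [lt_of_lt_of_le (by norm_num) (S.half_le v), S.alt_pos v]

def component (v : Fin n) : Set (Fin n) := {w | (M.graph S.maj).Reachable v w}

def unreached (v : Fin n) : Set (Fin n) :=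
  {z | ¬(M.graph (S.coloring (S.component v))).Reachable v z}

theorem reachable_of_mem_component {v w : Fin n} (hw : w ∈ S.component v) :
    (M.graph (S.coloring (S.component v))).Reachable v w := by
  refine SimpleGraph.Reachable.mono_of_reachable (fun x y hx hxy => ?_) hw
  have hy : y ∈ S.component v := hx.trans hxy.reachable
  refine ⟨hxy.1, ?_⟩
  simpa [coloring, show x ∈ S.component v from hx, hy] using hxy.2

theorem not_mem_component_of_mem_unreached {v z : Fin n} (hz : z ∈ S.unreached v) :
    z ∉ S.component v :=
  fun h => hz (S.reachable_of_mem_component h)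

theorem not_mem_unreached_self (v : Fin n) : v ∉ S.unreached v :=
  fun h => h (SimpleGraph.Reachable.refl v)

theorem f_maj_maj_eq_false {z w : Fin n} (hw : w ∉ S.component z) :
    M.f z w (S.maj z) (S.maj w) = false := by
  rw [Bool.eq_false_iff]
  intro hf
  have hzw : z ≠ w := by
    rintro rfl
    exact hw (SimpleGraph.Reachable.refl z)
  exact hw (SimpleGraph.Adj.reachable ⟨hzw, hf⟩)

theorem f_maj_alt_eq_false {v w z : Fin n} (hw : w ∈ S.component v) (hz : z ∈ S.unreached v) :
    M.f w z (S.maj w) (S.alt z) = false := by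
  rw [Bool.eq_false_iff]
  intro hf
  have hz' := S.not_mem_component_of_mem_unreached hz
  have hwz : w ≠ z := by
    rintro rfl
    exact hz' hw
  have hadj : (M.graph (S.coloring (S.component v))).Adj w z := by
    refine ⟨hwz, ?_⟩
    simpa [coloring, hw, hz'] using hf
  exact hz ((S.reachable_of_mem_component hw).trans hadj.reachable)

theorem mem_unreached_of_f_alt_alt {v z w : Fin n} (hz : z ∈ S.unreached v)
    (hw : w ∉ S.component v) (hzw : z ≠ w) (hf : M.f z w (S.alt z) (S.alt w) = true) :
    w ∈ S.unreached v := by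
  intro hr
  have hadj : (M.graph (S.coloring (S.component v))).Adj w z := by
    refine ⟨hzw.symm, ?_⟩
    rw [M.symm] at hf
    simpa [coloring, hw, S.not_mem_component_of_mem_unreached hz] using hf
  exact hz (hr.trans hadj.reachable)

theorem connected_of_forall_not_mem_unreached {v : Fin n} (hv : ∀ z, z ∉ S.unreached v) :
    (M.graph (S.coloring (S.component v))).Connected := by
  have hreach : ∀ z, (M.graph (S.coloring (S.component v))).Reachable v z :=
    fun z => not_not.mp (hv z)
  exact (SimpleGraph.connected_iff _).mpr
    ⟨fun x y => (hreach x).symm.trans (hreach y), ⟨v⟩⟩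

variable (hmarg : ∀ u v : Fin n, u ≠ v → 1 / 4 < M.pr (fun G => G.Adj u v))
include hmarg

theorem mem_unreached_trans {v z w : Fin n} (hz : z ∈ S.unreached v) (hw : w ∈ S.unreached z)
    (hf : M.f z w (S.alt z) (S.alt w) = true) : w ∈ S.unreached v := by
  have hzw : z ≠ w := by
    rintro rfl
    exact S.not_mem_unreached_self z hw
  by_cases hwv : w ∈ S.component v
  · refine absurd (hmarg z w hzw) (not_lt.mpr (S.pr_adj_le_quarter hzw ?_ ?_ ?_))
    · exact S.f_maj_maj_eq_false (S.not_mem_component_of_mem_unreached hw)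
    · exact S.f_maj_alt_eq_false (SimpleGraph.Reachable.refl z) hw
    · rw [M.symm]
      exact S.f_maj_alt_eq_false hwv hz
  · exact S.mem_unreached_of_f_alt_alt hz hwv hzw hf

theorem majProb_lt_of_mem_unreached {z w : Fin n} (hw : w ∈ S.unreached z)
    (hf : M.f z w (S.alt z) (S.alt w) = false) : S.majProb z < S.majProb w := by
  have hzw : z ≠ w := by
    rintro rfl
    exact S.not_mem_unreached_self z hw
  have hle := S.pr_adj_le hzw (S.f_maj_maj_eq_false (S.not_mem_component_of_mem_unreached hw))
    (S.f_maj_alt_eq_false (SimpleGraph.Reachable.refl z) hw) hf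
  have hq := hmarg z w hzw
  have hw1 : S.majProb w ≤ 1 := M.p_le_one w (S.maj w)
  have hw2 : 1 / 2 ≤ S.majProb w := S.half_le w
  nlinarith

end MajoritySplit

end ColoringModel

theorem two_color_upper_bound (n : ℕ) (hn : 3 ≤ n) (M : ColoringModel n)
    (hcols : ∀ v, Nat.card (M.Ω v) ≤ 2)
    (hmarg : ∀ u v : Fin n, u ≠ v → 1 / 4 < M.pr (fun G => G.Adj u v)) :
    0 < M.pr (fun G => G.Connected) := by
  obtain ⟨S⟩ := M.nonempty_majoritySplit hcols
  have : Nonempty (Fin n) := ⟨⟨0, by omega⟩⟩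
  obtain ⟨v, hv⟩ := exists_forall_not_rel_of_shortcut_of_ascent
    (R := fun v z => z ∈ S.unreached v) (P := fun z w => M.f z w (S.alt z) (S.alt w) = true)
    S.not_mem_unreached_self (fun _ _ _ => S.mem_unreached_trans hmarg)
    (fun _ _ hw hf => S.majProb_lt_of_mem_unreached hmarg hw (Bool.eq_false_iff.mpr hf))
  exact S.pr_pos_of_coloring _ (S.connected_of_forall_not_mem_unreached hv)
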